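/- Let X be an infinite-dimensional real Banach space having cotype q for some finite q, and let q_0 = inf{ q : X has cotype q }. If p > q_0, then for every strongly measurable Pettis integrable function f : [0,1] → X, for μ-almost every t ∈ [0,1] one has h^{-1/p} · ‖P-∫_t^{t+h} f dμ‖_X → 0 as h → 0⁺. -/

import Mathlib

/-!
The Pettis integral `ν E` of `f` is a finitely additive `X`-valued set function, bounded by the
uniform boundedness principle, say by `S`. For disjoint intervals `I₁, …, Iₙ` every signed sum
`∑ ±ν Iᵢ` is a difference of two values of `ν`, so cotype `q` gives `∑ ‖ν Iᵢ‖ ^ q ≤ (2 C S) ^ q`,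
where we pick a cotype exponent `q < p`. Let `s` be the set of `t` at which
`ε h ^ (1/p) < ‖ν (t, t + h]‖` for arbitrarily small `h > 0`. A Vitali covering of `s` by such
intervals of length at most `δ` gives
`|s| ≤ ∑ hᵢ ≤ ∑ δ ^ (1 - q/p) hᵢ ^ (q/p) ≤ δ ^ (1 - q/p) ε ^ (-q) (2 C S) ^ q`,
and letting `δ → 0` shows that `s` is null.
-/
open MeasureTheory Filter Set
open scoped ENNReal NNReal Topology

/-- Lebesgue measure on `[0,1]`. -/
noncomputable def mu01 : Measure ℝ := volume.restrict (Set.Icc 0 1)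

/-- `x` is the Pettis integral of `f` over the set `E` (w.r.t. the measure `μ`). -/
def IsPettisIntegralOn {X : Type*} [NormedAddCommGroup X] [NormedSpace ℝ X]
    (f : ℝ → X) (μ : Measure ℝ) (E : Set ℝ) (x : X) : Prop :=
  ∀ φ : X →L[ℝ] ℝ, φ x = ∫ ω in E, φ (f ω) ∂μ

/-- `f` is Pettis integrable w.r.t. `μ`. -/
def PettisIntegrable {X : Type*} [NormedAddCommGroup X] [NormedSpace ℝ X]
    (f : ℝ → X) (μ : Measure ℝ) : Prop :=
  (∀ φ : X →L[ℝ] ℝ, Integrable (fun ω => φ (f ω)) μ) ∧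
  ∀ E : Set ℝ, MeasurableSet E → ∃ x : X, IsPettisIntegralOn f μ E x

/-- `X` has cotype `q`. -/
def HasCotype (X : Type*) [NormedAddCommGroup X] (q : ℝ) : Prop :=
  ∃ C : ℝ, ∀ (n : ℕ) (x : Fin n → X),
    (∑ i, ‖x i‖ ^ q) ^ (1 / q) ≤
      C * Real.sqrt ((2 : ℝ) ^ (-(n : ℝ)) *
        ∑ ε : Fin n → Bool, ‖∑ i, (if ε i then x i else -x i)‖ ^ 2)

theorem le_rpow_mul_of_lt_rpow_neg_mul {h δ ε a p q : ℝ} (hh : 0 < h) (hhδ : h ≤ δ) (hε : 0 < ε)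
    (hq : 0 < q) (hqp : q ≤ p) (hlt : ε < h ^ (-(1 / p)) * a) :
    h ≤ δ ^ (1 - q / p) * (ε ^ (-q) * a ^ q) := by
  have hp : 0 < p := hq.trans_le hqp
  have hδ : 0 < δ := hh.trans_le hhδ
  have ha : 0 < a := pos_of_mul_pos_right (hε.trans hlt) (by positivity)
  have hγ : 0 ≤ 1 - q / p := sub_nonneg.2 ((div_le_one hp).2 hqp)
  have hroot : h ^ (1 / p) ≤ ε⁻¹ * a := by
    rw [Real.rpow_neg hh.le, ← div_eq_inv_mul, lt_div_iff₀ (by positivity)] at hlt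
    rw [le_inv_mul_iff₀ hε]
    exact hlt.le
  calc h = h ^ (1 - q / p) * (h ^ (1 / p)) ^ q := by
        rw [← Real.rpow_mul hh.le, ← Real.rpow_add hh, one_div_mul_eq_div, sub_add_cancel,
          Real.rpow_one]
    _ ≤ δ ^ (1 - q / p) * (ε⁻¹ * a) ^ q := by gcongr
    _ = δ ^ (1 - q / p) * (ε ^ (-q) * a ^ q) := by
        rw [Real.mul_rpow (by positivity) ha.le, Real.inv_rpow hε.le, Real.rpow_neg hε.le]

def HasCotypeWith (X : Type*) [NormedAddCommGroup X] (q C : ℝ) : Prop :=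
  ∀ (n : ℕ) (x : Fin n → X),
    (∑ i, ‖x i‖ ^ q) ^ (1 / q) ≤
      C * Real.sqrt ((2 : ℝ) ^ (-(n : ℝ)) *
        ∑ ε : Fin n → Bool, ‖∑ i, (if ε i then x i else -x i)‖ ^ 2)

section Cotype

variable {X : Type*} [NormedAddCommGroup X] {q C S p ε δ : ℝ}

theorem HasCotypeWith.mono {C' : ℝ} (hC : HasCotypeWith X q C) (hCC' : C ≤ C') :
    HasCotypeWith X q C' := fun n x =>
  (hC n x).trans (mul_le_mul_of_nonneg_right hCC' (Real.sqrt_nonneg _))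

theorem HasCotype.exists_nonneg (h : HasCotype X q) : ∃ C, 0 ≤ C ∧ HasCotypeWith X q C := by
  obtain ⟨C, hC⟩ := h
  exact ⟨max C 0, le_max_right _ _, HasCotypeWith.mono hC (le_max_left _ _)⟩

theorem norm_sum_ite_neg_le {n : ℕ} (x : Fin n → X)
    (hS : ∀ s : Finset (Fin n), ‖∑ i ∈ s, x i‖ ≤ S) (ε : Fin n → Bool) :
    ‖∑ i, (if ε i then x i else -x i)‖ ≤ 2 * S := by
  rw [Finset.sum_ite, Finset.sum_neg_distrib, ← sub_eq_add_neg, two_mul]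
  exact (norm_sub_le _ _).trans (add_le_add (hS _) (hS _))

theorem sqrt_two_rpow_neg_mul_sum_sq_le {n : ℕ} {M : ℝ} (hM : 0 ≤ M) (a : (Fin n → Bool) → ℝ)
    (ha : ∀ ε, |a ε| ≤ M) :
    Real.sqrt ((2 : ℝ) ^ (-(n : ℝ)) * ∑ ε, a ε ^ 2) ≤ M := by
  rw [Real.sqrt_le_left hM]
  calc (2 : ℝ) ^ (-(n : ℝ)) * ∑ ε, a ε ^ 2 ≤ (2 : ℝ) ^ (-(n : ℝ)) * ∑ _ε : Fin n → Bool, M ^ 2 :=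
        mul_le_mul_of_nonneg_left (Finset.sum_le_sum fun ε _ => sq_le_sq' (abs_le.1 (ha ε)).1
          (abs_le.1 (ha ε)).2) (by positivity)
    _ = M ^ 2 := by
        rw [Finset.sum_const, Finset.card_univ, Fintype.card_fun, Fintype.card_bool,
          Fintype.card_fin, nsmul_eq_mul, Real.rpow_neg zero_le_two, Real.rpow_natCast,
          Nat.cast_pow, Nat.cast_ofNat, inv_mul_cancel_left₀ (by positivity)]

theorem HasCotypeWith.sum_rpow_le_fin (hC : HasCotypeWith X q C) (hC0 : 0 ≤ C) (hq : 0 < q)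
    {n : ℕ} (x : Fin n → X) (hS : ∀ s : Finset (Fin n), ‖∑ i ∈ s, x i‖ ≤ S) :
    ∑ i, ‖x i‖ ^ q ≤ (2 * C * S) ^ q := by
  have hS0 : 0 ≤ S := by simpa using hS ∅
  have hrad := sqrt_two_rpow_neg_mul_sum_sq_le (by positivity) _
    fun ε => (abs_norm _).trans_le (norm_sum_ite_neg_le x hS ε)
  have := (hC n x).trans (mul_le_mul_of_nonneg_left hrad hC0)
  rwa [one_div, Real.rpow_inv_le_iff_of_pos (by positivity) (by positivity) hq, ← mul_assoc,
    mul_comm C 2] at this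

theorem HasCotypeWith.sum_rpow_le (hC : HasCotypeWith X q C) (hC0 : 0 ≤ C) (hq : 0 < q)
    {ι : Type*} (v : Finset ι) (x : ι → X) (hS : ∀ w ⊆ v, ‖∑ i ∈ w, x i‖ ≤ S) :
    ∑ i ∈ v, ‖x i‖ ^ q ≤ (2 * C * S) ^ q := by
  let e : Fin v.card ↪ ι := v.equivFin.symm.toEmbedding.trans (Function.Embedding.subtype _)
  rw [← Finset.sum_coe_sort v, ← v.equivFin.symm.sum_comp]
  refine hC.sum_rpow_le_fin hC0 hq (fun j => x (e j)) fun s => ?_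
  rw [← Finset.sum_map s e]
  refine hS _ fun i hi => ?_
  obtain ⟨j, -, rfl⟩ := Finset.mem_map.1 hi
  exact (v.equivFin.symm j).2

theorem HasCotypeWith.sum_le_of_lt_rpow_neg_mul_norm (hC : HasCotypeWith X q C) (hC0 : 0 ≤ C)
    (hq : 0 < q) (hqp : q ≤ p) (hε : 0 < ε) (hδ : 0 ≤ δ) {ι : Type*} (F : Finset ι) (x : ι → X)
    (h : ι → ℝ) (hS : ∀ w ⊆ F, ‖∑ i ∈ w, x i‖ ≤ S)
    (hh : ∀ i ∈ F, 0 < h i ∧ h i ≤ δ ∧ ε < h i ^ (-(1 / p)) * ‖x i‖) :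
    ∑ i ∈ F, h i ≤ δ ^ (1 - q / p) * (ε ^ (-q) * (2 * C * S) ^ q) :=
  calc ∑ i ∈ F, h i ≤ ∑ i ∈ F, δ ^ (1 - q / p) * (ε ^ (-q) * ‖x i‖ ^ q) :=
        Finset.sum_le_sum fun i hi =>
          le_rpow_mul_of_lt_rpow_neg_mul (hh i hi).1 (hh i hi).2.1 hε hq hqp (hh i hi).2.2
    _ = δ ^ (1 - q / p) * (ε ^ (-q) * ∑ i ∈ F, ‖x i‖ ^ q) := by
        rw [Finset.mul_sum, Finset.mul_sum]
    _ ≤ δ ^ (1 - q / p) * (ε ^ (-q) * (2 * C * S) ^ q) := by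
        gcongr
        exact hC.sum_rpow_le hC0 hq F x hS

end Cotype

section Pettis

variable {X : Type*} [NormedAddCommGroup X] [NormedSpace ℝ X] {f : ℝ → X} {μ : Measure ℝ}

theorem IsPettisIntegralOn.unique {E : Set ℝ} {x y : X} (hx : IsPettisIntegralOn f μ E x)
    (hy : IsPettisIntegralOn f μ E y) : x = y :=
  SeparatingDual.eq_iff_forall_dual_eq.2 fun φ => (hx φ).trans (hy φ).symm

theorem IsPettisIntegralOn.union {A B : Set ℝ} {x y : X}
    (hint : ∀ φ : X →L[ℝ] ℝ, Integrable (fun ω => φ (f ω)) μ)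
    (hx : IsPettisIntegralOn f μ A x) (hy : IsPettisIntegralOn f μ B y)
    (hAB : Disjoint A B) (hB : MeasurableSet B) : IsPettisIntegralOn f μ (A ∪ B) (x + y) :=
  fun φ => by
    rw [map_add, hx φ, hy φ, setIntegral_union hAB hB (hint φ).integrableOn (hint φ).integrableOn]

theorem IsPettisIntegralOn.biUnion_finset {ι : Type*} {w : Finset ι} {E : ι → Set ℝ} {x : ι → X}
    (hint : ∀ φ : X →L[ℝ] ℝ, Integrable (fun ω => φ (f ω)) μ)
    (hx : ∀ i ∈ w, IsPettisIntegralOn f μ (E i) (x i)) (hE : ∀ i ∈ w, MeasurableSet (E i))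
    (hd : (w : Set ι).PairwiseDisjoint E) :
    IsPettisIntegralOn f μ (⋃ i ∈ w, E i) (∑ i ∈ w, x i) := fun φ => by
  rw [map_sum, integral_biUnion_finset w hE hd fun i _ => (hint φ).integrableOn]
  exact Finset.sum_congr rfl fun i hi => hx i hi φ

/-- Uniform boundedness principle for the functionals `φ ↦ φ (ν E)` on the dual, each bounded by
`∫ |φ ∘ f|`. -/
theorem exists_norm_pettisIntegral_le {ν : Set ℝ → X}
    (hint : ∀ φ : X →L[ℝ] ℝ, Integrable (fun ω => φ (f ω)) μ)
    (hν : ∀ E, MeasurableSet E → IsPettisIntegralOn f μ E (ν E)) :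
    ∃ S, ∀ E, MeasurableSet E → ‖ν E‖ ≤ S := by
  let g : {E : Set ℝ // MeasurableSet E} → StrongDual ℝ (StrongDual ℝ X) :=
    fun E => NormedSpace.inclusionInDoubleDual ℝ X (ν E)
  have hpt : ∀ φ : StrongDual ℝ X, ∃ Cφ, ∀ E, ‖g E φ‖ ≤ Cφ := fun φ =>
    ⟨∫ ω, ‖φ (f ω)‖ ∂μ, fun E => by
      change ‖φ (ν E)‖ ≤ _
      rw [hν E E.2 φ]
      exact (norm_integral_le_integral_norm _).trans
        (setIntegral_le_integral (hint φ).norm (Eventually.of_forall fun _ => norm_nonneg _))⟩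
  obtain ⟨S, hS⟩ := banach_steinhaus hpt
  exact ⟨S, fun E hE => ((NormedSpace.inclusionInDoubleDualLi ℝ).norm_map (ν E)).symm.trans_le
    (hS ⟨E, hE⟩)⟩

end Pettis

theorem measure_eq_zero_of_forall_le_rpow {m : ℝ≥0∞} {γ K : ℝ} (hγ : 0 < γ)
    (h : ∀ δ > 0, m ≤ ENNReal.ofReal (δ ^ γ * K)) : m = 0 := by
  have hlim : Tendsto (fun δ : ℝ => ENNReal.ofReal (δ ^ γ * K)) (𝓝[>] 0) (𝓝 0) := by
    have := (ENNReal.continuous_ofReal.tendsto _).comp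
      ((Real.continuousAt_rpow_const 0 γ (Or.inr hγ.le)).tendsto.mul_const K)
    simpa [Function.comp_def, Real.zero_rpow hγ.ne'] using this.mono_left nhdsWithin_le_nhds
  exact le_antisymm (ge_of_tendsto hlim (eventually_nhdsWithin_of_forall h)) bot_le

theorem volume_le_of_sum_le_of_frequently {s : Set ℝ} {P : ℝ → ℝ → Prop} {M : ℝ}
    (hs : ∀ t ∈ s, ∃ᶠ h in 𝓝[>] 0, P t h)
    (hsum : ∀ F : Finset (ℝ × ℝ), (∀ a ∈ F, 0 < a.2 ∧ P a.1 a.2) →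
      (F : Set (ℝ × ℝ)).PairwiseDisjoint (fun a => Icc a.1 (a.1 + a.2)) → ∑ a ∈ F, a.2 ≤ M) :
    volume s ≤ ENNReal.ofReal M := by
  obtain ⟨u, hut, hu, hdisj, hcov⟩ := Vitali.exists_disjoint_covering_ae' volume s
    {a : ℝ × ℝ | 0 < a.2 ∧ P a.1 a.2} 6 (·.2) (·.1) (fun a => Icc a.1 (a.1 + a.2))
    (fun a ha => by
      rw [Real.closedBall_eq_Icc]
      exact Icc_subset_Icc (by linarith [ha.1]) le_rfl)
    (fun a ha => by
      rw [Real.volume_closedBall, Real.volume_Icc, add_sub_cancel_left,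
        show 2 * (3 * a.2) = 6 * a.2 by ring, ENNReal.ofReal_mul (by norm_num)]
      norm_num)
    (fun a ha => by
      rw [interior_Icc]
      exact nonempty_Ioo.2 (by linarith [ha.1]))
    (fun _ _ => isClosed_Icc)
    (fun t ht => ((hs t ht).and_eventually self_mem_nhdsWithin).mono
      fun h ⟨hP, hh⟩ => ⟨(t, h), ⟨hh, hP⟩, rfl, rfl⟩)
  calc volume s ≤ volume (⋃ a ∈ u, Icc a.1 (a.1 + a.2)) := measure_mono_ae (ae_le_set.2 hcov)
    _ ≤ ∑' a : u, volume (Icc (a : ℝ × ℝ).1 ((a : ℝ × ℝ).1 + (a : ℝ × ℝ).2)) :=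
        measure_biUnion_le volume hu _
    _ = ∑' a : u, ENNReal.ofReal (a : ℝ × ℝ).2 := by
        simp only [Real.volume_Icc, add_sub_cancel_left]
    _ ≤ ENNReal.ofReal M := by
        rw [ENNReal.tsum_eq_iSup_sum]
        refine iSup_le fun F => ?_
        rw [← ENNReal.ofReal_sum_of_nonneg fun a _ => (hut a.2).1.le]
        refine ENNReal.ofReal_le_ofReal ?_
        have := hsum (F.map (Function.Embedding.subtype _))
          (fun a ha => by
            obtain ⟨b, -, rfl⟩ := Finset.mem_map.1 ha
            exact hut b.2)
          (hdisj.subset (by simp))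
        rwa [Finset.sum_map] at this

theorem volume_setOf_frequently_lt_norm_pettisIntegral_eq_zero {X : Type*}
    [NormedAddCommGroup X] [NormedSpace ℝ X] {q C S p ε : ℝ} {f : ℝ → X} {μ : Measure ℝ}
    {ν : Set ℝ → X} (hC : HasCotypeWith X q C) (hC0 : 0 ≤ C) (hq : 0 < q) (hqp : q < p)
    (hint : ∀ φ : X →L[ℝ] ℝ, Integrable (fun ω => φ (f ω)) μ)
    (hν : ∀ E, MeasurableSet E → IsPettisIntegralOn f μ E (ν E))
    (hS : ∀ E, MeasurableSet E → ‖ν E‖ ≤ S) (hε : 0 < ε) :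
    volume {t | ∃ᶠ h in 𝓝[>] 0, ε < h ^ (-(1 / p)) * ‖ν (Ioc t (t + h))‖} = 0 := by
  refine measure_eq_zero_of_forall_le_rpow (K := ε ^ (-q) * (2 * C * S) ^ q)
    (sub_pos.2 ((div_lt_one (hq.trans hqp)).2 hqp))
    fun δ hδ => volume_le_of_sum_le_of_frequently
      (P := fun t h => h ≤ δ ∧ ε < h ^ (-(1 / p)) * ‖ν (Ioc t (t + h))‖) (fun t ht => ?_)
      fun F hF hdisj => ?_
  · exact ((ht.and_eventually (Ioc_mem_nhdsGT hδ)).mono fun h ⟨hlt, hmem⟩ => ⟨hmem.2, hlt⟩)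
  refine hC.sum_le_of_lt_rpow_neg_mul_norm hC0 hq hqp.le hε hδ.le F
    (fun a => ν (Ioc a.1 (a.1 + a.2))) (·.2) (fun w hw => ?_)
    fun a ha => ⟨(hF a ha).1, (hF a ha).2⟩
  have hw_meas : ∀ a ∈ w, MeasurableSet (Ioc a.1 (a.1 + a.2)) := fun _ _ => measurableSet_Ioc
  rw [(IsPettisIntegralOn.biUnion_finset hint (fun a _ => hν _ measurableSet_Ioc) hw_meas
    ((hdisj.subset hw).mono fun _ => Ioc_subset_Icc_self)).unique
    (hν _ (Finset.measurableSet_biUnion w hw_meas))]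
  exact hS _ (Finset.measurableSet_biUnion w hw_meas)

theorem tendsto_nhds_zero_of_forall_le_one_div {α : Type*} {l : Filter α} {u : α → ℝ}
    (h0 : ∀ᶠ x in l, 0 ≤ u x) (h : ∀ k : ℕ, ∀ᶠ x in l, u x ≤ 1 / ((k : ℝ) + 1)) :
    Tendsto u l (𝓝 0) := by
  refine tendsto_order.2 ⟨fun a ha => h0.mono fun x hx => ha.trans_le hx, fun a ha => ?_⟩
  obtain ⟨k, hk⟩ := exists_nat_one_div_lt ha
  exact (h k).mono fun x hx => hx.trans_lt hk

theorem statement5_general {X : Type*} [NormedAddCommGroup X] [NormedSpace ℝ X]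
    (hcot : ∃ q : ℝ, 2 ≤ q ∧ HasCotype X q)
    (q₀ : ℝ) (hq₀ : q₀ = sInf {q : ℝ | 2 ≤ q ∧ HasCotype X q})
    (p : ℝ) (hp : q₀ < p) :
    ∀ f : ℝ → X, StronglyMeasurable f → PettisIntegrable f mu01 →
      ∀ G : ℝ → X, (∀ t : ℝ, IsPettisIntegralOn f mu01 (Set.Icc 0 t) (G t)) →
        ∀ᵐ t ∂mu01,
          Tendsto (fun h : ℝ => h ^ (-(1 / p)) * ‖G (t + h) - G t‖) (𝓝[>] (0 : ℝ)) (𝓝 0) := by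
  intro f _ hf G hG
  choose! ν hν using hf.2
  obtain ⟨S, hS⟩ := exists_norm_pettisIntegral_le hf.1 hν
  obtain ⟨q, ⟨hq2, hcotq⟩, hqp⟩ := (csInf_lt_iff ⟨2, fun _ hq => hq.1⟩ hcot).1 (hq₀ ▸ hp)
  obtain ⟨C, hC0, hC⟩ := hcotq.exists_nonneg
  have hincr : ∀ t h, 0 ≤ t → 0 < h → G (t + h) - G t = ν (Ioc t (t + h)) := fun t h ht hh => by
    have hdisj : Disjoint (Icc 0 t) (Ioc t (t + h)) :=
      (Iic_disjoint_Ioc le_rfl).mono_left Icc_subset_Iic_self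
    rw [sub_eq_iff_eq_add', (hG (t + h)).unique]
    rw [← Icc_union_Ioc_eq_Icc ht (by linarith)]
    exact (hG t).union hf.1 (hν _ measurableSet_Ioc) hdisj measurableSet_Ioc
  have hgood : ∀ k : ℕ, ∀ᵐ t ∂volume,
      ∀ᶠ h in 𝓝[>] 0, h ^ (-(1 / p)) * ‖ν (Ioc t (t + h))‖ ≤ 1 / ((k : ℝ) + 1) := fun k => by
    have := volume_setOf_frequently_lt_norm_pettisIntegral_eq_zero hC hC0
      (by linarith) hqp hf.1 hν hS (ε := 1 / ((k : ℝ) + 1)) (by positivity)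
    simpa [not_frequently] using measure_eq_zero_iff_ae_notMem.1 this
  filter_upwards [ae_restrict_of_ae (ae_all_iff.2 hgood), ae_restrict_mem measurableSet_Icc]
    with t ht ht01
  refine tendsto_nhds_zero_of_forall_le_one_div (eventually_nhdsWithin_of_forall fun h hh =>
    mul_nonneg (Real.rpow_nonneg (le_of_lt hh) _) (norm_nonneg _)) fun k => ?_
  filter_upwards [ht k, self_mem_nhdsWithin] with h hk hh
  rwa [hincr t h ht01.1 hh]

theorem statement5 {X : Type*} [NormedAddCommGroup X] [NormedSpace ℝ X] [CompleteSpace X]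
    (hX : ¬ FiniteDimensional ℝ X)
    (hcot : ∃ q : ℝ, 2 ≤ q ∧ HasCotype X q)
    (q₀ : ℝ) (hq₀ : q₀ = sInf {q : ℝ | 2 ≤ q ∧ HasCotype X q})
    (p : ℝ) (hp : q₀ < p) :
    ∀ f : ℝ → X, StronglyMeasurable f → PettisIntegrable f mu01 →
      ∀ G : ℝ → X, (∀ t : ℝ, IsPettisIntegralOn f mu01 (Set.Icc 0 t) (G t)) →
        ∀ᵐ t ∂mu01,
          Tendsto (fun h : ℝ => h ^ (-(1 / p)) * ‖G (t + h) - G t‖) (𝓝[>] (0 : ℝ)) (𝓝 0) :=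
  statement5_general hcot q₀ hq₀ p hp
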